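/- arXiv:1207.4658 — 3 statements merged into one kernel-verified Lean document; each statement's English description precedes it below -/
import Mathlib

section
/- Let K be a field of characteristic not 2. Any preordering of K is contained in an ordering of K. -/
/-!
By Zorn's lemma a preordering `T` lies in a maximal preordering `P` (the union of a chain of
preorderings is one). If `-a ∉ P`, then `P + a P` is again a preordering: were
`-1 = x + a y` with `x, y ∈ P` and `y ≠ 0`, then `-a = (1 + x) y / y²` would lie in `P`.
So maximality forces `a ∈ P` or `-a ∈ P`, and `P ∩ -P = {0}` because `-1 = x (-x) / x²`.
-/

/-- A preordering of a field `K`: additively and multiplicatively closed,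
contains all squares, and does not contain `-1`. -/
def IsPreordering (K : Type*) [Field K] (T : Set K) : Prop :=
  (∀ x ∈ T, ∀ y ∈ T, x + y ∈ T) ∧ (∀ x ∈ T, ∀ y ∈ T, x * y ∈ T) ∧
    (∀ x : K, x ^ 2 ∈ T) ∧ (-1 : K) ∉ T

/-- An ordering of a field `K`: additively and multiplicatively closed,
with `P ∪ -P = K` and `P ∩ -P = {0}`. -/
def IsOrdering (K : Type*) [Field K] (P : Set K) : Prop :=
  (∀ x ∈ P, ∀ y ∈ P, x + y ∈ P) ∧ (∀ x ∈ P, ∀ y ∈ P, x * y ∈ P) ∧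
    (∀ x : K, x ∈ P ∨ -x ∈ P) ∧ (∀ x : K, x ∈ P → -x ∈ P → x = 0)

section

variable {K : Type*} [Field K]

namespace IsPreordering

variable {T : Set K}

theorem zero_mem (hT : IsPreordering K T) : (0 : K) ∈ T := by
  simpa using hT.2.2.1 0

theorem one_mem (hT : IsPreordering K T) : (1 : K) ∈ T := by
  simpa using hT.2.2.1 1

theorem eq_zero_of_mem_of_neg_mem (hT : IsPreordering K T) {x : K} (hx : x ∈ T)
    (hnx : -x ∈ T) : x = 0 := by
  obtain ⟨-, hmul, hsq, hneg⟩ := hT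
  by_contra hx0
  have h : (-1 : K) = x * -x * x⁻¹ ^ 2 := by field_simp
  exact hneg (h ▸ hmul _ (hmul x hx _ hnx) _ (hsq x⁻¹))

def adjoin (T : Set K) (a : K) : Set K :=
  {z | ∃ x ∈ T, ∃ y ∈ T, z = x + a * y}

theorem subset_adjoin (hT : IsPreordering K T) (a : K) : T ⊆ adjoin T a :=
  fun x hx => ⟨x, hx, 0, hT.zero_mem, by ring⟩

theorem mem_adjoin_self (hT : IsPreordering K T) (a : K) : a ∈ adjoin T a :=
  ⟨0, hT.zero_mem, 1, hT.one_mem, by ring⟩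

theorem adjoin_isPreordering (hT : IsPreordering K T) {a : K} (ha : -a ∉ T) :
    IsPreordering K (adjoin T a) := by
  have ⟨hadd, hmul, hsq, hneg⟩ := hT
  refine ⟨?_, ?_, fun x => hT.subset_adjoin a (hsq x), ?_⟩
  · rintro _ ⟨x, hx, y, hy, rfl⟩ _ ⟨x', hx', y', hy', rfl⟩
    exact ⟨x + x', hadd x hx x' hx', y + y', hadd y hy y' hy', by ring⟩
  · rintro _ ⟨x, hx, y, hy, rfl⟩ _ ⟨x', hx', y', hy', rfl⟩
    refine ⟨x * x' + a ^ 2 * (y * y'), ?_, x * y' + x' * y, ?_, by ring⟩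
    · exact hadd _ (hmul x hx x' hx') _ (hmul _ (hsq a) _ (hmul y hy y' hy'))
    · exact hadd _ (hmul x hx y' hy') _ (hmul x' hx' y hy)
  · rintro ⟨x, hx, y, hy, hxy⟩
    by_cases hy0 : y = 0
    · subst hy0
      exact hneg (by simpa [hxy] using hx)
    · have hna : -a = (1 + x) * y * y⁻¹ ^ 2 := by
        rw [show 1 + x = -a * y by linear_combination -hxy]
        field_simp
      exact ha (hna ▸ hmul _ (hmul _ (hadd 1 hT.one_mem x hx) y hy) _ (hsq y⁻¹))

theorem mem_or_neg_mem_of_maximal (hT : Maximal (IsPreordering K) T) (a : K) :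
    a ∈ T ∨ -a ∈ T := by
  by_contra! h
  exact h.1 (hT.2 (hT.1.adjoin_isPreordering h.2) (hT.1.subset_adjoin a)
    (hT.1.mem_adjoin_self a))

theorem isOrdering_of_maximal (hT : Maximal (IsPreordering K) T) : IsOrdering K T :=
  ⟨hT.1.1, hT.1.2.1, mem_or_neg_mem_of_maximal hT,
    fun _ hx hnx => hT.1.eq_zero_of_mem_of_neg_mem hx hnx⟩

end IsPreordering

theorem isPreordering_sUnion {c : Set (Set K)} (hc : ∀ T ∈ c, IsPreordering K T)
    (hchain : IsChain (· ⊆ ·) c) (hne : c.Nonempty) : IsPreordering K (⋃₀ c) := by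
  have closed {op : K → K → K} (h : ∀ T ∈ c, ∀ x ∈ T, ∀ y ∈ T, op x y ∈ T) :
      ∀ x ∈ ⋃₀ c, ∀ y ∈ ⋃₀ c, op x y ∈ ⋃₀ c := by
    rintro x ⟨A, hA, hxA⟩ y ⟨B, hB, hyB⟩
    rcases hchain.total hA hB with hAB | hBA
    · exact ⟨B, hB, h B hB x (hAB hxA) y hyB⟩
    · exact ⟨A, hA, h A hA x hxA y (hBA hyB)⟩
  obtain ⟨T, hTc⟩ := hne
  refine ⟨closed fun T hT => (hc T hT).1, closed fun T hT => (hc T hT).2.1,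
    fun x => ⟨T, hTc, (hc T hTc).2.2.1 x⟩, ?_⟩
  rintro ⟨A, hA, hmA⟩
  exact (hc A hA).2.2.2 hmA

end

theorem preordering_subset_ordering_general (K : Type*) [Field K]
    (T : Set K) (hT : IsPreordering K T) :
    ∃ P : Set K, IsOrdering K P ∧ T ⊆ P := by
  obtain ⟨P, hTP, hP⟩ := zorn_subset_nonempty {P | IsPreordering K P}
    (fun c hc hchain hne => ⟨⋃₀ c, isPreordering_sUnion hc hchain hne,
      fun _ => Set.subset_sUnion_of_mem⟩) T hT
  exact ⟨P, IsPreordering.isOrdering_of_maximal hP, hTP⟩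

/-- Any preordering of a field of characteristic not 2 is contained in an ordering. -/
theorem preordering_subset_ordering (K : Type*) [Field K] (hK : ringChar K ≠ 2)
    (T : Set K) (hT : IsPreordering K T) :
    ∃ P : Set K, IsOrdering K P ∧ T ⊆ P :=
  preordering_subset_ordering_general K T hT
end

section
/- Let K be a field of characteristic not 2 and T a preordering of K. Then T equals the intersection of all orderings P of K containing T. -/
/-!
Given `a ∉ T`, the set `T - aT` is again a preordering, and it contains `-a`. By Zorn's lemma it
lies in a maximal preordering `P`, and a maximal preordering is an ordering: if `x ∉ P` then
`P - xP = P` by maximality, so `-x ∈ P`. Since `-a ∈ P` and `a ≠ 0`, we get `a ∉ P`.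
-/

section

variable {K : Type*} [Field K]

def adjoinNeg (T : Set K) (a : K) : Set K :=
  {z | ∃ x ∈ T, ∃ y ∈ T, z = x - a * y}

namespace IsPreordering

variable {T : Set K}

theorem add_mem (hT : IsPreordering K T) {x y : K} (hx : x ∈ T) (hy : y ∈ T) : x + y ∈ T :=
  hT.1 x hx y hy

theorem mul_mem (hT : IsPreordering K T) {x y : K} (hx : x ∈ T) (hy : y ∈ T) : x * y ∈ T :=
  hT.2.1 x hx y hy

theorem sq_mem (hT : IsPreordering K T) (x : K) : x ^ 2 ∈ T :=
  hT.2.2.1 x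

theorem neg_one_notMem (hT : IsPreordering K T) : (-1 : K) ∉ T :=
  hT.2.2.2

theorem inv_mem (hT : IsPreordering K T) {x : K} (hx : x ∈ T) : x⁻¹ ∈ T := by
  have hx' : x⁻¹ = x * x⁻¹ ^ 2 := by
    rcases eq_or_ne x 0 with rfl | hx0
    · simp
    · field_simp
  exact hx' ▸ hT.mul_mem hx (hT.sq_mem x⁻¹)

theorem subset_adjoinNeg (hT : IsPreordering K T) (a : K) : T ⊆ adjoinNeg T a :=
  fun x hx => ⟨x, hx, 0, hT.zero_mem, by ring⟩

theorem neg_mem_adjoinNeg (hT : IsPreordering K T) (a : K) : -a ∈ adjoinNeg T a :=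
  ⟨0, hT.zero_mem, 1, hT.one_mem, by ring⟩

theorem adjoinNeg_of_notMem (hT : IsPreordering K T) {a : K} (ha : a ∉ T) :
    IsPreordering K (adjoinNeg T a) := by
  refine ⟨?_, ?_, fun z => hT.subset_adjoinNeg a (hT.sq_mem z), ?_⟩
  · rintro _ ⟨x, hx, y, hy, rfl⟩ _ ⟨x', hx', y', hy', rfl⟩
    exact ⟨x + x', hT.add_mem hx hx', y + y', hT.add_mem hy hy', by ring⟩
  · rintro _ ⟨x, hx, y, hy, rfl⟩ _ ⟨x', hx', y', hy', rfl⟩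
    exact ⟨x * x' + a ^ 2 * (y * y'),
      hT.add_mem (hT.mul_mem hx hx') (hT.mul_mem (hT.sq_mem a) (hT.mul_mem hy hy')),
      x * y' + x' * y, hT.add_mem (hT.mul_mem hx hy') (hT.mul_mem hx' hy), by ring⟩
  · rintro ⟨x, hx, y, hy, hxy⟩
    rcases eq_or_ne y 0 with rfl | hy0
    · exact hT.neg_one_notMem (by simpa [hxy] using hx)
    · have ha' : a = (x + 1) * y⁻¹ := by
        field_simp
        linear_combination hxy
      exact ha (ha' ▸ hT.mul_mem (hT.add_mem hx hT.one_mem) (hT.inv_mem hy))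

theorem sUnion_of_isChain {c : Set (Set K)} (hc : IsChain (· ⊆ ·) c) (hne : c.Nonempty)
    (hpre : ∀ Q ∈ c, IsPreordering K Q) : IsPreordering K (⋃₀ c) := by
  have common : ∀ {x y}, x ∈ ⋃₀ c → y ∈ ⋃₀ c → ∃ Q ∈ c, x ∈ Q ∧ y ∈ Q := by
    rintro x y ⟨Q₁, hQ₁, hx⟩ ⟨Q₂, hQ₂, hy⟩
    rcases hc.total hQ₁ hQ₂ with h | h
    · exact ⟨Q₂, hQ₂, h hx, hy⟩
    · exact ⟨Q₁, hQ₁, hx, h hy⟩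
  obtain ⟨Q₀, hQ₀⟩ := hne
  refine ⟨fun x hx y hy => ?_, fun x hx y hy => ?_, fun x => ⟨Q₀, hQ₀, (hpre Q₀ hQ₀).sq_mem x⟩,
    fun ⟨Q, hQ, h⟩ => (hpre Q hQ).neg_one_notMem h⟩
  · obtain ⟨Q, hQ, hxQ, hyQ⟩ := common hx hy
    exact ⟨Q, hQ, (hpre Q hQ).add_mem hxQ hyQ⟩
  · obtain ⟨Q, hQ, hxQ, hyQ⟩ := common hx hy
    exact ⟨Q, hQ, (hpre Q hQ).mul_mem hxQ hyQ⟩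

theorem exists_maximal_superset (hT : IsPreordering K T) :
    ∃ P, T ⊆ P ∧ Maximal (IsPreordering K) P :=
  zorn_subset_nonempty {Q | IsPreordering K Q}
    (fun c hcS hc hne => ⟨⋃₀ c, sUnion_of_isChain hc hne hcS, fun _ => Set.subset_sUnion_of_mem⟩)
    T hT

end IsPreordering

theorem Maximal.isOrdering {P : Set K} (hP : Maximal (IsPreordering K) P) : IsOrdering K P := by
  have hpre := hP.prop
  refine ⟨hpre.1, hpre.2.1, fun x => or_iff_not_imp_left.2 fun hx => ?_, fun x hx hnx => ?_⟩
  · exact hP.eq_of_subset (hpre.adjoinNeg_of_notMem hx) (hpre.subset_adjoinNeg x) ▸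
      hpre.neg_mem_adjoinNeg x
  · by_contra hx0
    have h : (-1 : K) = x * -x * x⁻¹ ^ 2 := by field_simp
    exact hpre.neg_one_notMem (h ▸ hpre.mul_mem (hpre.mul_mem hx hnx) (hpre.sq_mem x⁻¹))

theorem IsPreordering.exists_isOrdering_notMem {T : Set K} (hT : IsPreordering K T) {a : K}
    (ha : a ∉ T) : ∃ P, IsOrdering K P ∧ T ⊆ P ∧ a ∉ P := by
  obtain ⟨P, hsub, hP⟩ := (hT.adjoinNeg_of_notMem ha).exists_maximal_superset
  have hord := hP.isOrdering
  refine ⟨P, hord, (hT.subset_adjoinNeg a).trans hsub, fun haP => ?_⟩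
  have ha0 : a = 0 := hord.2.2.2 a haP (hsub (hT.neg_mem_adjoinNeg a))
  exact ha (ha0 ▸ hT.zero_mem)

end

theorem preordering_eq_iInter_orderings_general (K : Type*) [Field K]
    (T : Set K) (hT : IsPreordering K T) :
    T = ⋂ P ∈ {P : Set K | IsOrdering K P ∧ T ⊆ P}, P := by
  refine subset_antisymm (fun x hx => Set.mem_iInter₂.2 fun P hP => hP.2 hx) fun x hx => ?_
  by_contra hxT
  obtain ⟨P, hP, hTP, hxP⟩ := hT.exists_isOrdering_notMem hxT
  exact hxP (Set.mem_iInter₂.1 hx P ⟨hP, hTP⟩)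

/-- Artin: a preordering is the intersection of the orderings containing it. -/
theorem preordering_eq_iInter_orderings (K : Type*) [Field K] (hK : ringChar K ≠ 2)
    (T : Set K) (hT : IsPreordering K T) :
    T = ⋂ P ∈ {P : Set K | IsOrdering K P ∧ T ⊆ P}, P :=
  preordering_eq_iInter_orderings_general K T hT
end

section
/- Let K be a field of characteristic not 2 and let Q₁, Q₂ be quaternion algebras over K, each equipped with its canonical involution. The tensor product algebra with involution (Q₁, can) ⊗ (Q₂, can) is hyperbolic (i.e., contains an element e with e² = e whose image under the tensor involution is 1 − e) if and only if Q₁ or Q₂ is split (isomorphic to 2×2 matrices over K). -/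
open Quaternion TensorProduct

variable (K : Type) [Field K]

/-- The canonical involution of a quaternion algebra, as a `K`-linear map. -/
def quatStarLin (a b : K) : ℍ[K,a,b] →ₗ[K] ℍ[K,a,b] where
  toFun x := star x
  map_add' x y := star_add x y
  map_smul' r x := by simp

/-- The tensor product of the canonical involutions on `Q₁ ⊗[K] Q₂`. -/
noncomputable def tensorCanInvolution (a b c d : K) :
    ℍ[K,a,b] ⊗[K] ℍ[K,c,d] →ₗ[K] ℍ[K,a,b] ⊗[K] ℍ[K,c,d] :=
  TensorProduct.map (quatStarLin K a b) (quatStarLin K c d)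

/-- A quaternion algebra is split if it is isomorphic to the 2×2 matrix algebra. -/
def QuatIsSplit (a b : K) : Prop :=
  Nonempty (ℍ[K,a,b] ≃ₐ[K] Matrix (Fin 2) (Fin 2) K)

/-!
Let `σ` be the tensor product of the canonical involutions. As `2` is invertible, hyperbolic
idempotents `e` correspond to elements `y = 2e - 1` with `y² = 1` and `σ y = -y`. Since the
canonical involution is `-1` on pure quaternions, the `σ`-skew elements are the
`u ⊗ 1 + 1 ⊗ w` with `u`, `w` pure, and for these `y² = (u² + w²) + 2 u ⊗ w` with `u², w² ∈ K`.
Comparing scalar parts (through the functional `re ⊗ re`) gives `u² + w² = 1` and `u ⊗ w = 0`,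
hence `u² w² = 0`, so `u² = 1` or `w² = 1`.

It remains that `Q` is split iff it contains a pure quaternion `x` with `x² = 1`. Given such `x`,
an anticommuting `y` with `y² = m ≠ 0` identifies `Q` with `(1, m)`, which is `M₂(K)`
explicitly; the comparison map out of `M₂(K)` is injective as `M₂(K)` is simple, hence bijective.
-/

namespace QuaternionAlgebra

section CommRing

variable {R : Type*} [CommRing R] {c₁ c₃ : R}

theorem star_eq_neg_of_re_eq_zero {x : ℍ[R,c₁,0,c₃]} (hx : x.re = 0) : star x = -x := by
  ext <;> simp [hx]

theorem mul_self_eq_re_smul_one_of_re_eq_zero {x : ℍ[R,c₁,0,c₃]} (hx : x.re = 0) :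
    x * x = (x * x).re • 1 := by
  ext <;> simp [hx] <;> ring

theorem mul_comm_eq_neg_of_re_mul_eq_zero {x y : ℍ[R,c₁,0,c₃]} (hx : x.re = 0) (hy : y.re = 0)
    (h : (x * y).re = 0) : y * x = -(x * y) := by
  simp only [re_mul, hx, hy] at h
  ext <;> simp only [re_mul, imI_mul, imJ_mul, imK_mul, re_neg, imI_neg, imJ_neg, imK_neg, hx, hy]
  · linear_combination 2 * h
  all_goals ring

end CommRing

section Field

variable {F : Type*} [Field F] {c₁ c₃ : F}

theorem finrank_eq_finrank_matrix (c₁ c₃ : F) :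
    Module.finrank F ℍ[F,c₁,0,c₃] = Module.finrank F (Matrix (Fin 2) (Fin 2) F) := by
  simp [finrank_eq_four, Module.finrank_matrix]

theorem re_eq_zero_or_eq_coe_of_mul_self_eq_one (h2 : (2 : F) ≠ 0) {x : ℍ[F,c₁,0,c₃]}
    (hxx : x * x = 1) : x.re = 0 ∨ x = ↑x.re := by
  refine or_iff_not_imp_left.2 fun hre => ?_
  have hI := congrArg imI hxx
  have hJ := congrArg imJ hxx
  have hK := congrArg imK hxx
  simp only [imI_mul, imJ_mul, imK_mul, imI_one, imJ_one, imK_one, zero_mul, add_zero] at hI hJ hK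
  have h2re : 2 * x.re ≠ 0 := mul_ne_zero h2 hre
  ext
  · rfl
  · simpa using (mul_eq_zero.1 (by linear_combination hI : 2 * x.re * x.imI = 0)).resolve_left h2re
  · simpa using (mul_eq_zero.1 (by linear_combination hJ : 2 * x.re * x.imJ = 0)).resolve_left h2re
  · simpa using (mul_eq_zero.1 (by linear_combination hK : 2 * x.re * x.imK = 0)).resolve_left h2re

/-- `y` is the part of `z` orthogonal to `x` for the polar form `(x, z) ↦ (x * z).re`, with
`y² = z² - (x * z).re ^ 2`; if this vanished for `z = i, j, k`, the square of `x` would be `3`. -/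
theorem exists_anticommuting_of_mul_self_eq_one (h2 : (2 : F) ≠ 0) (h₁ : c₁ ≠ 0) (h₃ : c₃ ≠ 0)
    {x : ℍ[F,c₁,0,c₃]} (hx : x.re = 0) (hxx : x * x = 1) :
    ∃ y : ℍ[F,c₁,0,c₃], ∃ m : F, m ≠ 0 ∧ y * y = m • 1 ∧ y * x = -(x * y) := by
  have hN : c₁ * x.imI ^ 2 + c₃ * x.imJ ^ 2 - c₁ * c₃ * x.imK ^ 2 = 1 := by
    have := congrArg re hxx
    simp only [re_mul, re_one, hx, mul_zero, zero_mul, zero_add, add_zero] at this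
    linear_combination this
  obtain ⟨z, hz, hm⟩ : ∃ z : ℍ[F,c₁,0,c₃], z.re = 0 ∧ (z * z).re - (x * z).re ^ 2 ≠ 0 := by
    by_contra! h
    have hi := h ⟨0, 1, 0, 0⟩ rfl
    have hj := h ⟨0, 0, 1, 0⟩ rfl
    have hk := h ⟨0, 0, 0, 1⟩ rfl
    simp only [mk_mul_mk, re_mul, hx, mul_zero, mul_one, zero_mul, zero_add, add_zero, sub_zero,
      sub_self, zero_sub, even_two, Even.neg_pow] at hi hj hk
    have hp : c₁ * x.imI ^ 2 = 1 := mul_left_cancel₀ h₁ (by linear_combination -hi)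
    have hq : c₃ * x.imJ ^ 2 = 1 := mul_left_cancel₀ h₃ (by linear_combination -hj)
    have hr : c₁ * c₃ * x.imK ^ 2 = -1 :=
      mul_left_cancel₀ (mul_ne_zero h₁ h₃) (by linear_combination -hk)
    exact h2 (by linear_combination hN - hp - hq + hr)
  set B := (x * z).re with hB
  simp only [re_mul, hx, hz, zero_mul, add_zero, zero_add] at hB
  have hy : (z - B • x).re = 0 := by simp [hx, hz]
  refine ⟨z - B • x, _, hm, ?_, mul_comm_eq_neg_of_re_mul_eq_zero hx hy ?_⟩
  · rw [mul_self_eq_re_smul_one_of_re_eq_zero hy]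
    congr 1
    simp only [re_mul, re_sub, re_smul, imI_sub, imI_smul, imJ_sub, imJ_smul, imK_sub, imK_smul,
      hx, hz, smul_eq_mul, mul_zero, zero_mul, sub_self, zero_add, add_zero]
    linear_combination B ^ 2 * hN + 2 * B * hB
  · simp only [re_mul, re_sub, re_smul, imI_sub, imI_smul, imJ_sub, imJ_smul, imK_sub, imK_smul,
      hx, hz, smul_eq_mul, mul_zero, zero_mul, sub_self, zero_add, add_zero]
    linear_combination (-B) * hN - hB

end Field

end QuaternionAlgebra

theorem exists_hyperbolic_idempotent_iff {F : Type*} [Field F] (h2 : (2 : F) ≠ 0) {A : Type*}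
    [Ring A] [Algebra F A] (σ : A →ₗ[F] A) (hσ : σ 1 = 1) :
    (∃ e : A, e * e = e ∧ σ e = 1 - e) ↔ ∃ y : A, y * y = 1 ∧ σ y = -y := by
  constructor
  · rintro ⟨e, he, hσe⟩
    refine ⟨e + e - 1, ?_, ?_⟩
    · simp only [add_mul, mul_add, sub_mul, mul_sub, he, mul_one, one_mul]
      abel
    · rw [map_sub, map_add, hσe, hσ]
      abel
  · rintro ⟨y, hy, hσy⟩
    have h2inv : (2⁻¹ : F) * 2 = 1 := inv_mul_cancel₀ h2
    refine ⟨(2⁻¹ : F) • (1 + y), ?_, ?_⟩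
    · simp only [smul_mul_smul, add_mul, mul_add, hy, one_mul, mul_one]
      match_scalars <;> linear_combination 2⁻¹ * h2inv
    · rw [map_smul, map_add, hσ, hσy]
      match_scalars
      · linear_combination h2inv
      · ring

variable {K}

theorem quatIsSplit_one_left (h2 : (2 : K) ≠ 0) {m : K} (hm : m ≠ 0) : QuatIsSplit K 1 m := by
  let q : QuaternionAlgebra.Basis (Matrix (Fin 2) (Fin 2) K) 1 0 m :=
    { i := !![1, 0; 0, -1], j := !![0, m; 1, 0], k := !![1, 0; 0, -1] * !![0, m; 1, 0]
      i_mul_i := by simp [Matrix.one_fin_two]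
      j_mul_j := by simp [Matrix.one_fin_two]
      i_mul_j := rfl
      j_mul_i := by simp }
  have hq : ∀ z : ℍ[K,1,m], q.liftHom z =
      !![z.re + z.imI, m * (z.imJ + z.imK); z.imJ - z.imK, z.re - z.imI] := by
    intro z
    simp [q, QuaternionAlgebra.Basis.lift, Matrix.one_fin_two, Algebra.algebraMap_eq_smul_one]
    exact ⟨by ring, by ring, by ring⟩
  have hinj : Function.Injective q.liftHom := by
    refine (injective_iff_map_eq_zero _).2 fun z hz => ?_
    rw [hq, ← Matrix.ext_iff] at hz
    have h00 := hz 0 0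
    have h01 := hz 0 1
    have h10 := hz 1 0
    have h11 := hz 1 1
    simp only [Matrix.of_apply, Matrix.cons_val', Matrix.cons_val_zero, Matrix.cons_val_one,
      Matrix.cons_val_fin_one, Matrix.zero_apply, mul_eq_zero, hm, false_or] at h00 h01 h10 h11
    ext
    · exact (mul_eq_zero.1 (by linear_combination h00 + h11 : 2 * z.re = 0)).resolve_left h2
    · exact (mul_eq_zero.1 (by linear_combination h00 - h11 : 2 * z.imI = 0)).resolve_left h2
    · exact (mul_eq_zero.1 (by linear_combination h01 + h10 : 2 * z.imJ = 0)).resolve_left h2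
    · exact (mul_eq_zero.1 (by linear_combination h01 - h10 : 2 * z.imK = 0)).resolve_left h2
  exact ⟨.ofBijective q.liftHom ⟨hinj, (LinearMap.injective_iff_surjective_of_finrank_eq_finrank
    (f := q.liftHom.toLinearMap) (QuaternionAlgebra.finrank_eq_finrank_matrix 1 m)).1 hinj⟩⟩

theorem QuatIsSplit.of_algHom {a b a' b' : K} (h : QuatIsSplit K a' b')
    (f : ℍ[K,a',b'] →ₐ[K] ℍ[K,a,b]) : QuatIsSplit K a b := by
  obtain ⟨φ⟩ := h
  let g := f.comp φ.symm.toAlgHom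
  -- `M₂(K)` is a simple ring
  have hg : Function.Injective g := g.toRingHom.injective
  exact ⟨(AlgEquiv.ofBijective g ⟨hg, (LinearMap.injective_iff_surjective_of_finrank_eq_finrank
    (f := g.toLinearMap) (QuaternionAlgebra.finrank_eq_finrank_matrix a b).symm).1 hg⟩).symm⟩

theorem quatIsSplit_of_mul_self_eq_one (h2 : (2 : K) ≠ 0) {a b : K} (ha : a ≠ 0) (hb : b ≠ 0)
    {x : ℍ[K,a,b]} (hx : x.re = 0) (hxx : x * x = 1) : QuatIsSplit K a b := by
  obtain ⟨y, m, hm, hyy, hyx⟩ :=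
    QuaternionAlgebra.exists_anticommuting_of_mul_self_eq_one h2 ha hb hx hxx
  let q : QuaternionAlgebra.Basis ℍ[K,a,b] 1 0 m :=
    { i := x, j := y, k := x * y
      i_mul_i := by rw [hxx, one_smul, zero_smul, add_zero]
      j_mul_j := hyy
      i_mul_j := rfl
      j_mul_i := by rw [hyx, zero_smul, zero_sub] }
  exact (quatIsSplit_one_left h2 hm).of_algHom q.liftHom

theorem QuatIsSplit.exists_mul_self_eq_one (h2 : (2 : K) ≠ 0) {a b : K} (h : QuatIsSplit K a b) :
    ∃ x : ℍ[K,a,b], x.re = 0 ∧ x * x = 1 := by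
  obtain ⟨φ⟩ := h
  have hxx : φ.symm !![1, 0; 0, -1] * φ.symm !![1, 0; 0, -1] = 1 := by
    simp [← map_mul, Matrix.one_fin_two]
  refine ⟨_, ?_, hxx⟩
  refine (QuaternionAlgebra.re_eq_zero_or_eq_coe_of_mul_self_eq_one h2 hxx).resolve_right
    fun h => h2 ?_
  rw [AlgEquiv.symm_apply_eq, ← QuaternionAlgebra.coe_algebraMap, AlgEquiv.commutes,
    ← Matrix.ext_iff] at h
  have h00 := h 0 0
  have h11 := h 1 1
  simp only [Matrix.of_apply, Matrix.cons_val', Matrix.cons_val_zero, Matrix.cons_val_one,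
    Matrix.cons_val_fin_one, Matrix.algebraMap_matrix_apply, if_pos, Algebra.algebraMap_self,
    RingHom.id_apply] at h00 h11
  linear_combination h00 - h11

section Tensor

variable {a b c d : K}

@[simp]
theorem tensorCanInvolution_tmul (p : ℍ[K,a,b]) (q : ℍ[K,c,d]) :
    tensorCanInvolution K a b c d (p ⊗ₜ[K] q) = star p ⊗ₜ[K] star q :=
  rfl

theorem tensorCanInvolution_one : tensorCanInvolution K a b c d 1 = 1 := by
  simp [Algebra.TensorProduct.one_def]

theorem exists_sub_tensorCanInvolution_eq (z : ℍ[K,a,b] ⊗[K] ℍ[K,c,d]) :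
    ∃ u w, u.re = 0 ∧ w.re = 0 ∧
      z - tensorCanInvolution K a b c d z = u ⊗ₜ[K] 1 + 1 ⊗ₜ[K] w := by
  induction z using TensorProduct.induction_on with
  | zero => exact ⟨0, 0, rfl, rfl, by simp⟩
  | tmul p q =>
    refine ⟨(2 * q.re) • p.im, (2 * p.re) • q.im, by simp, by simp, ?_⟩
    have hp : p = p.re • 1 + p.im := by ext <;> simp
    have hq : q = q.re • 1 + q.im := by ext <;> simp
    have hsp : star p = p.re • 1 - p.im := by ext <;> simp
    have hsq : star q = q.re • 1 - q.im := by ext <;> simp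
    rw [tensorCanInvolution_tmul, hsp, hsq]
    nth_rewrite 1 [hp, hq]
    simp only [add_tmul, tmul_add, sub_tmul, tmul_sub, ← smul_tmul', tmul_smul]
    module
  | add x y hx hy =>
    obtain ⟨u, w, hu, hw, hxuw⟩ := hx
    obtain ⟨u', w', hu', hw', hyuw⟩ := hy
    refine ⟨u + u', w + w', by simp [hu, hu'], by simp [hw, hw'], ?_⟩
    rw [map_add, add_sub_add_comm, hxuw, hyuw, add_tmul, tmul_add]
    abel

theorem exists_eq_tmul_one_add_one_tmul_of_tensorCanInvolution_eq_neg (h2 : (2 : K) ≠ 0)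
    {z : ℍ[K,a,b] ⊗[K] ℍ[K,c,d]} (hz : tensorCanInvolution K a b c d z = -z) :
    ∃ u w, u.re = 0 ∧ w.re = 0 ∧ z = u ⊗ₜ[K] 1 + 1 ⊗ₜ[K] w := by
  obtain ⟨u, w, hu, hw, huw⟩ := exists_sub_tensorCanInvolution_eq z
  refine ⟨(2⁻¹ : K) • u, (2⁻¹ : K) • w, by simp [hu], by simp [hw], ?_⟩
  rw [← smul_tmul', tmul_smul, ← smul_add, ← huw, hz, sub_neg_eq_add, ← two_smul K, smul_smul,
    inv_mul_cancel₀ h2, one_smul]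

theorem eq_zero_of_smul_one_add_tmul_eq_zero {r : K} {u : ℍ[K,a,b]} (hu : u.re = 0)
    (w : ℍ[K,c,d]) (h : r • (1 : ℍ[K,a,b] ⊗[K] ℍ[K,c,d]) + u ⊗ₜ[K] w = 0) : r = 0 := by
  have := congrArg (TensorProduct.lift
    ((LinearMap.mul K K).compl₁₂ (QuaternionAlgebra.reₗ a 0 b) (QuaternionAlgebra.reₗ c 0 d))) h
  simpa [Algebra.TensorProduct.one_def, hu] using this

theorem mul_self_eq_one_or_of_tmul_one_add_one_tmul (h2 : (2 : K) ≠ 0) {u : ℍ[K,a,b]}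
    {w : ℍ[K,c,d]} (hu : u.re = 0) (hw : w.re = 0)
    (h : (u ⊗ₜ[K] 1 + 1 ⊗ₜ[K] w) * (u ⊗ₜ[K] 1 + 1 ⊗ₜ[K] w) = 1) : u * u = 1 ∨ w * w = 1 := by
  set s := (u * u).re
  set t := (w * w).re
  have hu2 : u * u = s • 1 := QuaternionAlgebra.mul_self_eq_re_smul_one_of_re_eq_zero hu
  have hw2 : w * w = t • 1 := QuaternionAlgebra.mul_self_eq_re_smul_one_of_re_eq_zero hw
  have hsq : (u ⊗ₜ[K] 1 + 1 ⊗ₜ[K] w) * (u ⊗ₜ[K] 1 + 1 ⊗ₜ[K] w)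
      = (s + t) • (1 : ℍ[K,a,b] ⊗[K] ℍ[K,c,d]) + (2 : K) • (u ⊗ₜ[K] w) := by
    simp only [add_mul, mul_add, Algebra.TensorProduct.tmul_mul_tmul, one_mul, mul_one, hu2, hw2,
      Algebra.TensorProduct.one_def, ← smul_tmul', tmul_smul]
    module
  have hst : s + t = 1 := by
    rw [hsq] at h
    exact sub_eq_zero.1 (eq_zero_of_smul_one_add_tmul_eq_zero hu ((2 : K) • w)
      (by rw [tmul_smul, sub_smul, one_smul, sub_add_eq_add_sub, h, sub_self]))
  have huw : u ⊗ₜ[K] w = 0 := by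
    rw [hsq, hst, one_smul, add_eq_left, smul_eq_zero] at h
    exact h.resolve_left h2
  have hst' : s * t = 0 := by
    refine eq_zero_of_smul_one_add_tmul_eq_zero (u := (0 : ℍ[K,a,b])) rfl (0 : ℍ[K,c,d]) ?_
    have : (u ⊗ₜ[K] 1) * (u ⊗ₜ[K] w) * (1 ⊗ₜ[K] w)
        = (s * t) • (1 : ℍ[K,a,b] ⊗[K] ℍ[K,c,d]) := by
      simp only [Algebra.TensorProduct.tmul_mul_tmul, one_mul, mul_one, hu2, hw2,
        Algebra.TensorProduct.one_def, smul_mul_assoc, smul_tmul, tmul_smul, smul_smul]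
    rw [← this, huw, mul_zero, zero_mul, zero_tmul, add_zero]
  rcases mul_eq_zero.1 hst' with hs | ht
  · right
    rw [hw2, show t = 1 by linear_combination hst - hs, one_smul]
  · left
    rw [hu2, show s = 1 by linear_combination hst - ht, one_smul]

end Tensor

/-- `(Q₁, can) ⊗ (Q₂, can)` is hyperbolic iff `Q₁` or `Q₂` is split. -/
theorem tensor_canonical_involutions_hyperbolic_iff_split
    (hK : ringChar K ≠ 2) (a b c d : K)
    (ha : a ≠ 0) (hb : b ≠ 0) (hc : c ≠ 0) (hd : d ≠ 0) :
    (∃ e : ℍ[K,a,b] ⊗[K] ℍ[K,c,d],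
        e * e = e ∧ tensorCanInvolution K a b c d e = 1 - e) ↔
      (QuatIsSplit K a b ∨ QuatIsSplit K c d) := by
  have h2 : (2 : K) ≠ 0 := Ring.two_ne_zero hK
  rw [exists_hyperbolic_idempotent_iff h2 _ tensorCanInvolution_one]
  constructor
  · rintro ⟨y, hyy, hσy⟩
    obtain ⟨u, w, hu, hw, rfl⟩ :=
      exists_eq_tmul_one_add_one_tmul_of_tensorCanInvolution_eq_neg h2 hσy
    exact (mul_self_eq_one_or_of_tmul_one_add_one_tmul h2 hu hw hyy).imp
      (quatIsSplit_of_mul_self_eq_one h2 ha hb hu) (quatIsSplit_of_mul_self_eq_one h2 hc hd hw)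
  · rintro (h | h) <;> obtain ⟨x, hx, hxx⟩ := h.exists_mul_self_eq_one h2
    · exact ⟨x ⊗ₜ[K] 1, by simp [hxx, Algebra.TensorProduct.one_def],
        by simp [QuaternionAlgebra.star_eq_neg_of_re_eq_zero hx, neg_tmul]⟩
    · exact ⟨1 ⊗ₜ[K] x, by simp [hxx, Algebra.TensorProduct.one_def],
        by simp [QuaternionAlgebra.star_eq_neg_of_re_eq_zero hx, tmul_neg]⟩
end
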